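/- Let A be a finite hoop and M a finite MV-chain. The set of product morphisms from M to A is in natural bijection with the set of idempotent elements of A, where a product morphism ψ corresponds to ψ(0), and conversely each idempotent f gives the product morphism sending 1 to 1 and every x ≠ 1 to f. -/
import Mathlib


/-- A hoop: a commutative monoid with a residuation-like arrow satisfying
(H1) `x → x = 1`, (H2) `(x·y) → z = x → (y → z)`, (H3) `x·(x→y) = y·(y→x)`. -/
class Hoop (α : Type*) extends CommMonoid α where
  arr : α → α → α
  arr_self : ∀ x : α, arr x x = 1
  arr_mul : ∀ x y z : α, arr (x * y) z = arr x (arr y z)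
  divis : ∀ x y : α, x * arr x y = y * arr y x

namespace Hoop

variable {α β γ : Type*} [Hoop α] [Hoop β] [Hoop γ]

/-- The induced order: `x ≤ y` iff `x → y = 1`. -/
def hle (x y : α) : Prop := arr x y = 1

/-- The induced meet: `x ∧ y = x·(x → y)`. -/
def hmeet (x y : α) : α := x * arr x y

/-- A product morphism of hoops: `f 1 = 1` and
`f x · f y = f (x·y) = f x ∧ f y = f (x ∧ y)`. -/
def IsProdMorphism {α β : Type*} [Hoop α] [Hoop β] (f : α → β) : Prop :=
  f 1 = 1 ∧ ∀ x y : α,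
    f x * f y = f (x * y) ∧ f (x * y) = hmeet (f x) (f y) ∧
      hmeet (f x) (f y) = f (hmeet x y)

/-- A filter of a hoop: a nonempty up-set closed under multiplication. -/
def IsFilter (F : Set α) : Prop :=
  F.Nonempty ∧ (∀ x ∈ F, ∀ y : α, hle x y → y ∈ F) ∧ ∀ x ∈ F, ∀ y ∈ F, x * y ∈ F

/-- The congruence induced by a filter: `x θ_F y` iff `(x→y)·(y→x) ∈ F`. -/
def frel (F : Set α) (x y : α) : Prop := arr x y * arr y x ∈ F

/- ### Auxiliary lemmas -/

lemma arr_one_left (x : α) : arr 1 x = x := by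
  have hu : x * arr x 1 = arr 1 x := by have h := divis x 1; rwa [one_mul] at h
  have h6 : arr 1 (arr x 1) = arr x 1 := by rw [← arr_mul, one_mul]
  have h7 : arr x 1 * arr (arr x 1) 1 = arr x 1 := by
    have h := divis (arr x 1) 1; rwa [one_mul, h6] at h
  have h3 : arr x (arr 1 x) = 1 := by rw [← arr_mul, mul_one, arr_self]
  have h4 : arr 1 x * arr (arr 1 x) x = x := by
    have h := divis (arr 1 x) x; rwa [h3, mul_one] at h
  have h5 : arr (arr 1 x) x = arr (arr x 1) 1 := by
    rw [← hu, mul_comm, arr_mul, arr_self]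
  have h8 : arr 1 x * arr (arr x 1) 1 = x := by rw [← h5]; exact h4
  calc arr 1 x = x * arr x 1 := hu.symm
    _ = x * (arr x 1 * arr (arr x 1) 1) := by rw [h7]
    _ = (x * arr x 1) * arr (arr x 1) 1 := by rw [mul_assoc]
    _ = arr 1 x * arr (arr x 1) 1 := by rw [hu]
    _ = x := h8

lemma hle_antisymm {x y : α} (h1 : hle x y) (h2 : hle y x) : x = y := by
  have h := divis x y
  rw [hle] at h1 h2
  rw [h1, h2, mul_one, mul_one] at h
  exact h

lemma hmeet_one_left (x : α) : hmeet 1 x = x := by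
  rw [hmeet, one_mul, arr_one_left]

lemma hmeet_one_right (x : α) : hmeet x 1 = x := by
  rw [hmeet, divis x 1, one_mul, arr_one_left]

lemma hmeet_self_of_idem {a : α} (_ha : a * a = a) : hmeet a a = a := by
  rw [hmeet, arr_self, mul_one]

/-- In a totally ordered hoop, `1` is the top element. -/
lemma arr_one_of_total {M : Type*} [Hoop M] (htotal : ∀ x y : M, hle x y ∨ hle y x)
    (x : M) : arr x 1 = 1 := by
  rcases htotal x 1 with h | h
  · exact h
  · rw [hle, arr_one_left] at h
    rw [h, arr_self]

lemma hle_trans_of_top {M : Type*} [Hoop M] (htop : ∀ x : M, arr x 1 = 1)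
    {x y z : M} (h1 : hle x y) (h2 : hle y z) : hle x z := by
  rw [hle] at h1 h2 ⊢
  have hx : x = y * arr y x := by
    have h := divis x y; rwa [h1, mul_one] at h
  rw [hx, mul_comm, arr_mul, h2, htop]

lemma hle_mul_arr (x y : α) : hle x (arr y (x * y)) := by
  rw [hle, ← arr_mul, arr_self]

lemma mul_hle_left_of_top {M : Type*} [Hoop M] (htop : ∀ x : M, arr x 1 = 1)
    (x y : M) : hle (x * y) x := by
  rw [hle, mul_comm, arr_mul, arr_self, htop]

lemma mul_hle_mul_of_top {M : Type*} [Hoop M] (htop : ∀ x : M, arr x 1 = 1)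
    {a b c d : M} (h1 : hle a b) (h2 : hle c d) : hle (a * c) (b * d) := by
  have hab : hle (a * c) (b * c) := by
    rw [hle, arr_mul]
    have := hle_trans_of_top htop h1 (hle_mul_arr b c)
    exact this
  have hcd : hle (b * c) (b * d) := by
    rw [hle, mul_comm, arr_mul]
    have hd : hle d (arr b (b * d)) := by
      rw [hle, ← arr_mul, mul_comm, arr_self]
    exact hle_trans_of_top htop h2 hd
  exact hle_trans_of_top htop hab hcd

lemma mul_eq_one_of_total {M : Type*} [Hoop M] (htotal : ∀ x y : M, hle x y ∨ hle y x)
    {x y : M} (h : x * y = 1) : x = 1 ∧ y = 1 := by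
  have htop := arr_one_of_total htotal
  constructor
  · have h1 := mul_hle_left_of_top htop x y
    rw [hle, h, arr_one_left] at h1
    exact h1
  · have h1 := mul_hle_left_of_top htop y x
    rw [hle, mul_comm, h, arr_one_left] at h1
    exact h1

/-- A product morphism has idempotent values. -/
lemma prodMorphism_idem {M : Type*} [Hoop M] {f : M → α} (hf : IsProdMorphism f)
    (x : M) : f x * f x = f x := by
  have h := hf.2 x x
  rw [h.1, h.2.1, hmeet, arr_self, mul_one]

open Classical in
/-- For a finite hoop `A` and a finite MV-chain `M` (a nontrivial totally
ordered bounded simple hoop with least element `z`), the product morphisms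
`M → A` are in natural bijection with the idempotents of `A`: a morphism `ψ`
corresponds to `ψ(0)`, and an idempotent `a` corresponds to the morphism
sending `1` to `1` and every `x ≠ 1` to `a`. -/
theorem prodMorphism_equiv_idempotents
    {M : Type*} [Hoop M] [Fintype M] [Fintype α]
    (htotal : ∀ x y : M, hle x y ∨ hle y x)
    (z : M) (hz : ∀ x : M, hle z x) (hznetop : z ≠ 1)
    (hsimple : ∀ F : Set M, IsFilter F → F = {1} ∨ F = Set.univ) :
    ∃ e : {ψ : M → α // IsProdMorphism ψ} ≃ {a : α // a * a = a},
      (∀ ψ : {ψ : M → α // IsProdMorphism ψ}, (e ψ).val = ψ.val z) ∧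
      (∀ a : {a : α // a * a = a},
        (e.symm a).val = fun x : M => if x = 1 then (1 : α) else a.val) := by
  have htop := arr_one_of_total htotal
  -- z is idempotent in M
  have hzz : z * z = z := by
    refine hle_antisymm ?_ (hz _)
    exact mul_hle_left_of_top htop z z
  -- every x ≠ 1 has a power equal to z
  have hpow : ∀ x : M, x ≠ 1 → ∃ n : ℕ, x ^ (n + 1) = z := by
    intro x hx
    set F : Set M := {y | ∃ n : ℕ, hle (x ^ n) y} with hF
    have hFfilter : IsFilter F := by
      refine ⟨⟨1, 0, ?_⟩, ?_, ?_⟩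
      · rw [pow_zero, hle, arr_self]
      · rintro a ⟨n, hn⟩ b hab
        exact ⟨n, hle_trans_of_top htop hn hab⟩
      · rintro a ⟨n, hn⟩ b ⟨m, hm⟩
        exact ⟨n + m, by rw [pow_add]; exact mul_hle_mul_of_top htop hn hm⟩
    have hxF : x ∈ F := ⟨1, by rw [pow_one, hle, arr_self]⟩
    rcases hsimple F hFfilter with h | h
    · rw [h] at hxF
      exact absurd hxF hx
    · have hzF : z ∈ F := by rw [h]; trivial
      obtain ⟨n, hn⟩ := hzF
      have hxz : x ^ n = z := hle_antisymm hn (hz _)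
      cases n with
      | zero => rw [pow_zero] at hxz; exact absurd hxz.symm hznetop
      | succ m => exact ⟨m, hxz⟩
  -- the backward map gives a product morphism
  have hback : ∀ a : α, a * a = a →
      IsProdMorphism (fun x : M => if x = 1 then (1 : α) else a) := by
    intro a ha
    refine ⟨by simp, ?_⟩
    intro x y
    by_cases hx : x = 1
    · subst hx
      simp only [eq_self_iff_true, if_true, one_mul, hmeet_one_left]
      exact ⟨trivial, trivial, trivial⟩
    · by_cases hy : y = 1
      · subst hy
        have hm1 : hmeet x 1 = x := hmeet_one_right x
        simp only [if_neg hx, eq_self_iff_true, if_true, mul_one, hm1, hmeet_one_right]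
        exact ⟨trivial, trivial, trivial⟩
      · have hxy : x * y ≠ 1 := fun h => hx (mul_eq_one_of_total htotal h).1
        have hmxy : hmeet x y ≠ 1 := by
          intro h
          have h1 := mul_eq_one_of_total htotal (h : x * arr x y = 1)
          exact hx h1.1
        simp only [if_neg hx, if_neg hy, if_neg hxy, if_neg hmxy]
        exact ⟨ha, (hmeet_self_of_idem ha).symm, hmeet_self_of_idem ha⟩
  -- a product morphism is constant off 1
  have hconst : ∀ ψ : M → α, IsProdMorphism ψ → ∀ x : M, x ≠ 1 → ψ x = ψ z := by
    intro ψ hψ x hx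
    obtain ⟨n, hn⟩ := hpow x hx
    have hidem := prodMorphism_idem hψ x
    have hpowψ : ∀ m : ℕ, ψ (x ^ (m + 1)) = ψ x := by
      intro m
      induction m with
      | zero => rw [pow_one]
      | succ k ih =>
        rw [pow_succ, mul_comm, ← (hψ.2 x (x ^ (k + 1))).1, ih, hidem]
    rw [← hn, hpowψ]
  refine ⟨{
    toFun := fun ψ => ⟨ψ.val z, by
      have h := (ψ.2.2 z z).1
      rw [hzz] at h
      exact h⟩
    invFun := fun a => ⟨fun x => if x = 1 then (1 : α) else a.val, hback a.val a.2⟩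
    left_inv := by
      rintro ⟨ψ, hψ⟩
      ext x
      simp only
      split
      · next h => rw [h, hψ.1]
      · next h => exact (hconst ψ hψ x h).symm
    right_inv := by
      rintro ⟨a, ha⟩
      ext
      simp only [if_neg hznetop]
  }, fun ψ => rfl, fun a => rfl⟩

end Hoop
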